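/- arXiv:2008.11094 — 2 statements merged into one kernel-verified Lean document; each statement's English description precedes it below -/
import Mathlib

section
/- Every clique in the Gaifman graph of GA is contained in a set of the form S_p = {⟦p,a⟧ | a ∈ λ(p)} for some play p. Consequently the image under ε_A of any clique in GA is contained in a guarded set of A. -/
open FirstOrder

/-- The last entry of a play (list of sets), `λ(p)`. -/
def Lam {A : Type*} (p : List (Set A)) : Set A := p.getLastD ∅

/-- A focussed play: a list of subsets together with a focus element. -/
structure FPlay (A : Type*) where
  play : List (Set A)
  focus : A

/-- A focussed play is valid if its play is nonempty and its focus belongs to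
the last entry of the play. -/
def Valid {A : Type*} (x : FPlay A) : Prop :=
  x.play ≠ [] ∧ x.focus ∈ Lam x.play

/-- `r` is the greatest common prefix of `p` and `q`. -/
def IsGCP {A : Type*} (r p q : List (Set A)) : Prop :=
  r <+: p ∧ r <+: q ∧ ∀ u : List (Set A), u <+: p → u <+: q → u <+: r

/-- The equivalence on focussed plays: equal foci, nonempty greatest common
prefix, and the focus belongs to the last entry of every play on the path
between the two plays through their greatest common prefix. -/
def FEquiv {A : Type*} (x y : FPlay A) : Prop :=
  x.focus = y.focus ∧ ∃ r : List (Set A), IsGCP r x.play y.play ∧ r ≠ [] ∧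
    (∀ u : List (Set A), r <+: u → u <+: x.play → x.focus ∈ Lam u) ∧
    (∀ u : List (Set A), r <+: u → u <+: y.play → x.focus ∈ Lam u)

/-- The interpretation of a relation symbol on (representatives of) classes of
focussed plays: the classes have representatives with a common play whose foci
are related in `A`. -/
def GRel {L : FirstOrder.Language} {A : Type*} [L.Structure A] {n : ℕ}
    (R : L.Relations n) (x : Fin n → FPlay A) : Prop :=
  ∃ (q : List (Set A)) (b : Fin n → A),
    (∀ i, FEquiv (x i) ⟨q, b i⟩) ∧ FirstOrder.Language.Structure.RelMap R b


/-- A set is atom-guarded if contained in the support of a related tuple. -/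
def AtomGuarded (L : FirstOrder.Language) (A : Type*) [L.Structure A]
    (X : Set A) : Prop :=
  ∃ (n : ℕ) (R : L.Relations n) (t : Fin n → A),
    FirstOrder.Language.Structure.RelMap R t ∧ X ⊆ Set.range t

/-- Gaifman adjacency in GA (on representatives): two inequivalent classes
co-occurring in a tuple related in GA. -/
def GAdj (L : FirstOrder.Language) {A : Type*} [L.Structure A]
    (x y : FPlay A) : Prop :=
  ¬ FEquiv x y ∧ ∃ (n : ℕ) (R : L.Relations n) (t : Fin n → FPlay A),
    GRel R t ∧ (∃ i, FEquiv (t i) x) ∧ (∃ j, FEquiv (t j) y)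

section Aux
variable {A : Type*}

lemma prefix_antisymm {l₁ l₂ : List (Set A)} (h : l₁ <+: l₂) (h' : l₂ <+: l₁) : l₁ = l₂ :=
  List.IsPrefix.eq_of_length h (le_antisymm h.length_le h'.length_le)

lemma exists_gcp (p q : List (Set A)) : ∃ r, IsGCP r p q := by
  classical
  set P : ℕ → Prop := fun n => p.take n <+: q with hP
  refine ⟨p.take (Nat.findGreatest P p.length), List.take_prefix _ _,
    Nat.findGreatest_spec (P := P) (Nat.zero_le _) (by simp [hP]), ?_⟩
  intro u hup huq
  have hu : u = p.take u.length := List.prefix_iff_eq_take.mp hup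
  have hle : u.length ≤ Nat.findGreatest P p.length :=
    Nat.le_findGreatest hup.length_le (by rw [hP]; simpa [← hu])
  calc u = p.take u.length := hu
    _ <+: p.take (Nat.findGreatest P p.length) := List.take_prefix_take_left hle

lemma gcp_unique {r r' p q : List (Set A)} (h : IsGCP r p q) (h' : IsGCP r' p q) : r = r' :=
  prefix_antisymm (h'.2.2 r h.1 h.2.1) (h.2.2 r' h'.1 h'.2.1)

lemma feq_refl {x : FPlay A} (h : Valid x) : FEquiv x x := by
  refine ⟨rfl, x.play, ⟨List.prefix_rfl, List.prefix_rfl, fun u h1 _ => h1⟩, h.1, ?_, ?_⟩ <;>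
  · intro u h1 h2
    rw [← prefix_antisymm h1 h2]
    exact h.2

lemma feq_symm {x y : FPlay A} (h : FEquiv x y) : FEquiv y x := by
  obtain ⟨hf, r, hg, hne, h1, h2⟩ := h
  exact ⟨hf.symm, r, ⟨hg.2.1, hg.1, fun u hu hu' => hg.2.2 u hu' hu⟩, hne,
    fun u hu hu' => hf ▸ h2 u hu hu', fun u hu hu' => hf ▸ h1 u hu hu'⟩

lemma feq_trans {x y z : FPlay A} (hxy : FEquiv x y) (hyz : FEquiv y z) : FEquiv x z := by
  obtain ⟨hf1, r1, hg1, hr1ne, h1x, h1y⟩ := hxy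
  obtain ⟨hf2, r2, hg2, hr2ne, h2y, h2z⟩ := hyz
  obtain ⟨g, hg⟩ := exists_gcp x.play z.play
  rcases List.prefix_or_prefix_of_prefix hg1.2.1 hg2.1 with h12 | h21
  · have hr1g : r1 <+: g := hg.2.2 r1 hg1.1 (h12.trans hg2.2.1)
    have hgne : g ≠ [] := fun h => hr1ne (List.prefix_nil.mp (h ▸ hr1g))
    refine ⟨hf1.trans hf2, g, hg, hgne, fun u hgu hux => h1x u (hr1g.trans hgu) hux, ?_⟩
    intro u hgu huz
    rcases List.prefix_or_prefix_of_prefix huz hg2.2.1 with hur2 | hr2u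
    · have huy : u <+: y.play := hur2.trans hg2.1
      rcases List.prefix_or_prefix_of_prefix huy hg1.2.1 with hur1 | hr1u
      · have : u = r1 := prefix_antisymm hur1 (hr1g.trans hgu)
        exact h1x u (this ▸ List.prefix_rfl) (this ▸ hg1.1)
      · exact h1y u hr1u huy
    · exact hf1 ▸ h2z u hr2u huz
  · have hr2g : r2 <+: g := hg.2.2 r2 (h21.trans hg1.1) hg2.2.1
    have hgne : g ≠ [] := fun h => hr2ne (List.prefix_nil.mp (h ▸ hr2g))
    refine ⟨hf1.trans hf2, g, hg, hgne, ?_,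
      fun u hgu huz => hf1 ▸ h2z u (hr2g.trans hgu) huz⟩
    intro u hgu hux
    rcases List.prefix_or_prefix_of_prefix hux hg1.1 with hur1 | hr1u
    · have huy : u <+: y.play := hur1.trans hg1.2.1
      rcases List.prefix_or_prefix_of_prefix huy hg2.1 with hur2 | hr2u
      · have : u = r2 := prefix_antisymm hur2 (hr2g.trans hgu)
        exact hf1 ▸ h2y u (this ▸ List.prefix_rfl) huy
      · exact hf1 ▸ h2y u hr2u huy
    · exact h1x u hr1u hux

/-- A basic consequence of `FEquiv x ⟨q, a⟩`. -/
lemma feq_basic {x : FPlay A} {q : List (Set A)} {a : A} (h : FEquiv x ⟨q, a⟩) :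
    x.focus = a ∧ q ≠ [] ∧ a ∈ Lam q := by
  obtain ⟨hf, r, hg, hne, _, h2⟩ := h
  refine ⟨hf, fun hq => hne (List.prefix_nil.mp (hq ▸ hg.2.1)), ?_⟩
  rw [← show x.focus = a from hf]
  exact h2 q hg.2.1 List.prefix_rfl

/-- Restriction of an equivalence to a play between the gcp and one endpoint. -/
lemma feq_restrict {x : FPlay A} {q u r : List (Set A)} {c : A}
    (h : FEquiv x ⟨q, c⟩) (hr : IsGCP r x.play q) (hru : r <+: u)
    (hu : u <+: q ∨ u <+: x.play) : FEquiv x ⟨u, c⟩ := by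
  obtain ⟨hf, r', hg', hne', hx', hq'⟩ := h
  have hrr : r' = r := gcp_unique hg' hr
  subst hrr
  rcases hu with hu | hu
  · exact ⟨hf, r', ⟨hg'.1, hru, fun v h1 h2 => hg'.2.2 v h1 (h2.trans hu)⟩, hne',
      hx', fun v h1 h2 => hq' v h1 (h2.trans hu)⟩
  · refine ⟨hf, u, ⟨hu, List.prefix_rfl, fun v _ h2 => h2⟩,
      fun h => hne' (List.prefix_nil.mp (h ▸ hru)),
      fun v h1 h2 => hx' v (hru.trans h1) h2, fun v h1 h2 => ?_⟩
    rw [prefix_antisymm h2 h1]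
    exact hx' u hru hu

/-- Plays between two representing plays also represent. -/
lemma good_between {x : FPlay A} {q₁ q₂ u : List (Set A)}
    (h₁ : FEquiv x ⟨q₁, x.focus⟩) (h₂ : FEquiv x ⟨q₂, x.focus⟩)
    (hu₁ : q₁ <+: u) (hu₂ : u <+: q₂) : FEquiv x ⟨u, x.focus⟩ := by
  obtain ⟨-, r₂, hg₂, -, -, -⟩ := id h₂
  rcases List.prefix_or_prefix_of_prefix hg₂.2.1 hu₂ with hr2u | hur2
  · exact feq_restrict h₂ hg₂ hr2u (Or.inl hu₂)
  · obtain ⟨-, r₁, hg₁, -, -, -⟩ := id h₁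
    exact feq_restrict h₁ hg₁ (hg₁.2.1.trans hu₁) (Or.inr (hur2.trans hg₂.1))

lemma exists_min_length {S : Set (List (Set A))} (h : S.Nonempty) :
    ∃ m ∈ S, ∀ u ∈ S, m.length ≤ u.length := by
  obtain ⟨m, hm, hlen⟩ := Nat.sInf_mem (h.image List.length)
  exact ⟨m, hm, fun u hu => hlen ▸ Nat.sInf_le ⟨u, hu, rfl⟩⟩

end Aux

lemma lam_mem {A : Type*} {p : List (Set A)} (h : p ≠ []) : Lam p ∈ p := by
  cases p with
  | nil => exact absurd rfl h
  | cons b l =>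
    show List.getLastD (b :: l) ∅ ∈ b :: l
    rw [List.getLastD_cons]
    exact List.getLastD_mem_cons (l := l) (a := b)


/-- Every clique in the Gaifman graph of GA is contained in a set of the form
S_p = {⟦p,a⟧ | a ∈ λ(p)}; consequently the image of any clique under the counit
is contained in a guarded set of A. -/
theorem clique_contained_in_Sp {L : FirstOrder.Language} [L.IsRelational]
    {A : Type*} [L.Structure A]
    (C : Set (FPlay A)) (hfin : C.Finite) (hne : C.Nonempty)
    (hval : ∀ x ∈ C, Valid x ∧ x.play.Forall (AtomGuarded L A))
    (hclique : ∀ x ∈ C, ∀ y ∈ C, ¬ FEquiv x y → GAdj L x y) :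
    ∃ p : List (Set A), p ≠ [] ∧ p.Forall (AtomGuarded L A) ∧
      (∀ x ∈ C, ∃ a ∈ Lam p, FEquiv x ⟨p, a⟩) ∧
      ∃ Y : Set A, AtomGuarded L A Y ∧
        (fun x : FPlay A => x.focus) '' C ⊆ Y := by
  classical
  have hvd : ∀ x ∈ C, Valid x := fun x hx => (hval x hx).1
  have hM : ∀ x ∈ C, ∃ m, (m <+: x.play ∧ FEquiv x ⟨m, x.focus⟩) ∧
      ∀ u, u <+: x.play → FEquiv x ⟨u, x.focus⟩ → m.length ≤ u.length := by
    intro x hx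
    obtain ⟨m, hm, hmin⟩ := exists_min_length
      (S := {u | u <+: x.play ∧ FEquiv x ⟨u, x.focus⟩})
      ⟨x.play, List.prefix_rfl, feq_refl (hvd x hx)⟩
    exact ⟨m, hm, fun u h1 h2 => hmin u ⟨h1, h2⟩⟩
  choose! M hM1 hM2 using hM
  have hkey : ∀ x ∈ C, ∀ q, FEquiv x ⟨q, x.focus⟩ → M x <+: q := by
    intro x hx q hq
    obtain ⟨-, r, hgr, -, -, -⟩ := id hq
    have hrg : FEquiv x ⟨r, x.focus⟩ := feq_restrict hq hgr List.prefix_rfl (Or.inl hgr.2.1)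
    have hlen : (M x).length ≤ r.length := hM2 x hx r hgr.1 hrg
    exact (List.prefix_of_prefix_length_le (hM1 x hx).1 hgr.1 hlen).trans hgr.2.1
  have hGG : ∀ x ∈ C, ∀ y ∈ C, ∃ q, FEquiv x ⟨q, x.focus⟩ ∧ FEquiv y ⟨q, y.focus⟩ := by
    intro x hx y hy
    by_cases hxy : FEquiv x y
    · refine ⟨x.play, feq_refl (hvd x hx), ?_⟩
      have h1 : FEquiv y x := feq_symm hxy
      have h2 : FEquiv y ⟨x.play, x.focus⟩ := h1
      rwa [← h1.1] at h2
    · obtain ⟨-, n, R, t, ⟨q, b, hb, -⟩, ⟨i, hi⟩, ⟨j, hj⟩⟩ := hclique x hx y hy hxy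
      have hxi : FEquiv x ⟨q, b i⟩ := feq_trans (feq_symm hi) (hb i)
      have hyj : FEquiv y ⟨q, b j⟩ := feq_trans (feq_symm hj) (hb j)
      rw [← show x.focus = b i from hxi.1] at hxi
      rw [← show y.focus = b j from hyj.1] at hyj
      exact ⟨q, hxi, hyj⟩
  obtain ⟨x0, hx0, hmax⟩ := Set.exists_max_image C (fun x => (M x).length) hfin hne
  set p := M x0 with hp
  have hpe : FEquiv x0 ⟨p, x0.focus⟩ := (hM1 x0 hx0).2
  have hpx : p <+: x0.play := (hM1 x0 hx0).1
  have hrep : ∀ y ∈ C, FEquiv y ⟨p, y.focus⟩ := by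
    intro y hy
    obtain ⟨q, hq0, hqy⟩ := hGG x0 hx0 y hy
    have hpq : p <+: q := hkey x0 hx0 q hq0
    have hyq : M y <+: q := hkey y hy q hqy
    have hyp : M y <+: p := List.prefix_of_prefix_length_le hyq hpq (hmax y hy)
    exact good_between (hM1 y hy).2 hqy hyp hpq
  have hpne : p ≠ [] := (feq_basic hpe).2.1
  have hforall : p.Forall (AtomGuarded L A) := by
    rw [List.forall_iff_forall_mem]
    intro a ha
    exact List.forall_iff_forall_mem.mp (hval x0 hx0).2 a (hpx.subset ha)
  have hguard : AtomGuarded L A (Lam p) :=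
    List.forall_iff_forall_mem.mp hforall _ (lam_mem hpne)
  refine ⟨p, hpne, hforall,
    fun y hy => ⟨y.focus, (feq_basic (hrep y hy)).2.2, hrep y hy⟩, Lam p, hguard, ?_⟩
  rintro a ⟨y, hy, rfl⟩
  exact (feq_basic (hrep y hy)).2.2
end

section
/- The Kleisli coextension is well defined: if (p₁,a) ∼ (p₂,a) are equivalent focussed plays and h : GA → B is a homomorphism, then the focussed plays produced by the coextension construction from (p₁,a) and (p₂,a) are equivalent, so h*(⟦p₁,a⟧) = h*(⟦p₂,a⟧). -/
/-- The play part of the Kleisli coextension: the j-th entry is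
V_j = { h ⟦[U₁,…,U_j], a⟧ | a ∈ U_j }. -/
def coextPlay {A B : Type*} (h : FPlay A → B) (p : List (Set A)) :
    List (Set B) :=
  (List.range p.length).map fun j =>
    {b : B | ∃ a : A, a ∈ Lam (p.take (j + 1)) ∧ h ⟨p.take (j + 1), a⟩ = b}

/-- The Kleisli coextension of `h`, on representatives:
h*(⟦[U₁,…,Uₙ],a⟧) = ⟦[V₁,…,Vₙ], h(⟦[U₁,…,Uₙ],a⟧)⟧. -/
def coext {A B : Type*} (h : FPlay A → B) (x : FPlay A) : FPlay B :=
  ⟨coextPlay h x.play, h x⟩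

/-! ### Auxiliary material -/

open Classical in
/-- Longest common prefix of two lists. -/
noncomputable def gcp {α : Type*} : List α → List α → List α
  | a :: as, b :: bs => if a = b then a :: gcp as bs else []
  | _, _ => []

lemma gcp_prefix_left {α : Type*} : ∀ l₁ l₂ : List α, gcp l₁ l₂ <+: l₁
  | [], _ => by simp [gcp]
  | _ :: _, [] => by simp [gcp]
  | a :: as, b :: bs => by
    by_cases hab : a = b
    · simpa [gcp, hab] using gcp_prefix_left as bs
    · simp [gcp, hab]

lemma gcp_prefix_right {α : Type*} : ∀ l₁ l₂ : List α, gcp l₁ l₂ <+: l₂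
  | [], _ => by simp [gcp]
  | _ :: _, [] => by simp [gcp]
  | a :: as, b :: bs => by
    by_cases hab : a = b
    · simpa [gcp, hab] using gcp_prefix_right as bs
    · simp [gcp, hab]

lemma gcp_greatest {α : Type*} : ∀ {u l₁ l₂ : List α},
    u <+: l₁ → u <+: l₂ → u <+: gcp l₁ l₂
  | [], _, _, _, _ => by simp
  | c :: cs, a :: as, b :: bs, h1, h2 => by
    obtain ⟨hca, hcs1⟩ := List.cons_prefix_cons.1 h1
    obtain ⟨hcb, hcs2⟩ := List.cons_prefix_cons.1 h2
    subst hca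
    have hab : c = b := hcb
    subst hab
    simp only [gcp, if_pos rfl]
    exact List.cons_prefix_cons.2 ⟨rfl, gcp_greatest hcs1 hcs2⟩
  | c :: cs, [], _, h1, _ => by simp at h1
  | c :: cs, _ :: _, [], _, h2 => by simp at h2

@[simp] lemma coextPlay_length {A B : Type*} (h : FPlay A → B) (p : List (Set A)) :
    (coextPlay h p).length = p.length := by simp [coextPlay]

lemma coextPlay_take {A B : Type*} (h : FPlay A → B) (p : List (Set A)) (k : ℕ) :
    coextPlay h (p.take k) = (coextPlay h p).take k := by
  unfold coextPlay
  rw [← List.map_take, List.take_range, List.length_take]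
  apply List.map_congr_left
  intro j hj
  simp only [List.mem_range] at hj
  have hjk : j + 1 ≤ k := Nat.succ_le_of_lt (lt_of_lt_of_le hj (min_le_left _ _))
  rw [List.take_take, min_eq_left hjk]

lemma coextPlay_prefix {A B : Type*} (h : FPlay A → B) {r p : List (Set A)}
    (hrp : r <+: p) : coextPlay h r <+: coextPlay h p := by
  have := List.prefix_iff_eq_take.1 hrp
  rw [show r = p.take r.length from this, coextPlay_take]
  exact List.take_prefix _ _

lemma Lam_eq_getLast {A : Type*} (l : List (Set A)) (hl : l ≠ []) :
    Lam l = l.getLast hl := by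
  rw [Lam, List.getLastD_eq_getLast?, List.getLast?_eq_getLast hl]
  rfl

lemma Lam_coextPlay {A B : Type*} (h : FPlay A → B) (q : List (Set A)) (hq : q ≠ []) :
    Lam (coextPlay h q) = {b : B | ∃ a : A, a ∈ Lam q ∧ h ⟨q, a⟩ = b} := by
  have hn : 0 < q.length := List.length_pos_iff.2 hq
  have hne : coextPlay h q ≠ [] := by
    rw [← List.length_pos_iff]
    simpa using hn
  rw [Lam_eq_getLast _ hne, List.getLast_eq_getElem]
  simp only [coextPlay, List.getElem_map, List.getElem_range, List.length_map,
    List.length_range]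
  rw [show q.length - 1 + 1 = q.length by omega, List.take_length]

/-- Key lemma: if `u` lies between `coextPlay h r` and `coextPlay h p`, then
`h ⟨p, f⟩ ∈ Lam u`. -/
lemma key {A B : Type*} (h : FPlay A → B)
    (hwd : ∀ y z : FPlay A, FEquiv y z → h y = h z)
    (r p : List (Set A)) (f : A) (hrne : r ≠ []) (hrp : r <+: p)
    (hpath : ∀ u : List (Set A), r <+: u → u <+: p → f ∈ Lam u)
    (u : List (Set B)) (hru : coextPlay h r <+: u) (hup : u <+: coextPlay h p) :
    h ⟨p, f⟩ ∈ Lam u := by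
  set k := u.length with hk
  have hkr : r.length ≤ k := by
    have := hru.length_le
    simpa using this
  have hkp : k ≤ p.length := by
    have := hup.length_le
    simpa using this
  have hune : u = coextPlay h (p.take k) := by
    rw [coextPlay_take]
    exact List.prefix_iff_eq_take.1 hup
  have hrq : r <+: p.take k := List.prefix_take_iff.2 ⟨hrp, hkr⟩
  have hqne : p.take k ≠ [] := by
    intro hc
    have hlen := congrArg List.length hc
    rw [List.length_take, List.length_nil] at hlen
    have hr0 : r.length = 0 := by omega
    exact hrne (List.length_eq_zero_iff.1 hr0)
  have hfq : f ∈ Lam (p.take k) := hpath _ hrq (List.take_prefix _ _)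
  have heq : h ⟨p.take k, f⟩ = h ⟨p, f⟩ := by
    apply hwd
    refine ⟨rfl, p.take k, ⟨List.prefix_refl _, List.take_prefix _ _,
      fun v hv _ => hv⟩, hqne, ?_, ?_⟩
    · intro v hv1 hv2
      have : v = p.take k := hv2.sublist.antisymm hv1.sublist
      simpa [this] using hfq
    · intro v hv1 hv2
      exact hpath v (hrq.trans hv1) hv2
  rw [hune, Lam_coextPlay h _ hqne]
  exact ⟨f, hfq, heq⟩

/-- The Kleisli coextension is well defined: if h is constant on ∼-classes and
(p₁,a) ∼ (p₂,a), then the focussed plays produced by the coextension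
construction are equivalent. -/
theorem coext_well_defined {A B : Type*} (h : FPlay A → B)
    (hwd : ∀ y z : FPlay A, FEquiv y z → h y = h z)
    (x₁ x₂ : FPlay A) (h₁ : Valid x₁) (h₂ : Valid x₂)
    (he : FEquiv x₁ x₂) :
    FEquiv (coext h x₁) (coext h x₂) := by
  obtain ⟨hf, r, ⟨hrp, hrq, hgcp⟩, hrne, hpath1, hpath2⟩ := he
  have hfoc : h x₁ = h x₂ :=
    hwd x₁ x₂ ⟨hf, r, ⟨hrp, hrq, hgcp⟩, hrne, hpath1, hpath2⟩
  set R := gcp (coextPlay h x₁.play) (coextPlay h x₂.play) with hR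
  have hcr1 : coextPlay h r <+: R :=
    gcp_greatest (coextPlay_prefix h hrp) (coextPlay_prefix h hrq)
  have hRne : R ≠ [] := by
    intro hc
    rw [hc] at hcr1
    have hnil := List.prefix_nil.1 hcr1
    have h0 := congrArg List.length hnil
    simp at h0
    exact hrne h0
  refine ⟨hfoc, R, ⟨gcp_prefix_left _ _, gcp_prefix_right _ _,
    fun u hu1 hu2 => gcp_greatest hu1 hu2⟩, hRne, ?_, ?_⟩
  · intro u hu1 hu2
    have : h ⟨x₁.play, x₁.focus⟩ ∈ Lam u :=
      key h hwd r x₁.play x₁.focus hrne hrp hpath1 u (hcr1.trans hu1) hu2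
    simpa [coext] using this
  · intro u hu1 hu2
    have hpath2' : ∀ v : List (Set A), r <+: v → v <+: x₂.play →
        x₂.focus ∈ Lam v := by
      intro v hv1 hv2
      rw [← hf]
      exact hpath2 v hv1 hv2
    have : h ⟨x₂.play, x₂.focus⟩ ∈ Lam u :=
      key h hwd r x₂.play x₂.focus hrne hrq hpath2' u (hcr1.trans hu1) hu2
    simpa [coext, hfoc] using this
end
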